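/- Let P be a centrally symmetric convex 2m-gon in the plane centered at the origin, and suppose P + X is a k-fold translative tiling of the plane for a discrete multiset X. Then for every vertex v of a translate of P in the tiling, k equals φ(v) + ψ(v), where φ(v) is the total winding multiplicity (1/(2π) times the sum of all inner angles at v over all adjacent wheels of translates having v on their boundary) and ψ(v) is the number of translates P + x_i with v in the interior of P + x_i. -/

import Mathlib

/-!
Off the boundaries of the translates, which are null sets since `P` is convex, every point is
covered exactly `k` times. Hence the finitely many translates meeting a small ball around `v`
fill exactly `k` times its area, so after dividing by the area of the ball and letting the radius
tend to `0`, the local densities `θ i` of the translates at `v` add up to `k`. The density is `1`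
for a translate containing `v` in its interior and `0` for one missing `v`; what is left is the
winding multiplicity of the translates having `v` on their boundary.
-/

open MeasureTheory Pointwise Filter Topology

section Multiplicity

variable {α ι : Type*}

theorem setOf_mem_eq_setOf_mem_interior_of_notMem_frontier [TopologicalSpace α]
    {A : ι → Set α} (hA : ∀ i, IsClosed (A i)) {p : α} (hp : ∀ i, p ∉ frontier (A i)) :
    {i | p ∈ A i} = {i | p ∈ interior (A i)} := by
  ext i
  simp only [Set.mem_ofPred_eq]
  refine ⟨fun hpA => ?_, fun hpA => interior_subset hpA⟩
  by_contra hint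
  exact hp i ((hA i).frontier_eq ▸ ⟨hpA, hint⟩)

theorem ae_ncard_setOf_mem_eq [TopologicalSpace α] [MeasurableSpace α] {μ : Measure α}
    [Countable ι] {A : ι → Set α} (hA : ∀ i, IsClosed (A i))
    (hfront : ∀ i, μ (frontier (A i)) = 0) {k : ℕ}
    (hcover : ∀ p, k ≤ {i | p ∈ A i}.ncard ∧ {i | p ∈ interior (A i)}.ncard ≤ k) :
    ∀ᵐ p ∂μ, {i | p ∈ A i}.ncard = k := by
  have hnull : ∀ᵐ p ∂μ, ∀ i, p ∉ frontier (A i) := ae_all_iff.mpr fun i =>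
    measure_eq_zero_iff_ae_notMem.mp (hfront i)
  filter_upwards [hnull] with p hp
  refine le_antisymm ?_ (hcover p).1
  rw [setOf_mem_eq_setOf_mem_interior_of_notMem_frontier hA hp]
  exact (hcover p).2

theorem sum_measure_inter_eq_mul [MeasurableSpace α] {μ : Measure α} {A : ι → Set α}
    (hA : ∀ i, MeasurableSet (A i)) {B : Set α} (hB : MeasurableSet B) {F : Finset ι}
    (hF : ∀ i, (A i ∩ B).Nonempty → i ∈ F) {k : ℕ}
    (hk : ∀ᵐ p ∂μ, {i | p ∈ A i}.ncard = k) :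
    ∑ i ∈ F, μ (A i ∩ B) = k * μ B := by
  classical
  have hcount : ∀ᵐ p ∂μ.restrict B, ∑ i ∈ F, (A i).indicator 1 p = (k : ENNReal) := by
    filter_upwards [ae_restrict_mem hB, ae_restrict_of_ae hk] with p hpB hpk
    have hfilter : {i | p ∈ A i} = ↑(F.filter fun i => p ∈ A i) := by
      ext i
      simpa using fun hpA => hF i ⟨p, hpA, hpB⟩
    simp only [Set.indicator_apply, Pi.one_apply, Finset.sum_boole]
    rw [← Set.ncard_coe_finset, ← hfilter, hpk]
  calc ∑ i ∈ F, μ (A i ∩ B)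
      = ∑ i ∈ F, ∫⁻ p, (A i).indicator 1 p ∂μ.restrict B := by
        refine Finset.sum_congr rfl fun i _ => ?_
        rw [lintegral_indicator_one (hA i), Measure.restrict_apply (hA i)]
    _ = ∫⁻ p, ∑ i ∈ F, (A i).indicator 1 p ∂μ.restrict B :=
        (lintegral_finsetSum F fun i _ => measurable_one.indicator (hA i)).symm
    _ = k * μ B := by
        rw [lintegral_congr_ae hcount, lintegral_const, Measure.restrict_apply_univ]

theorem finsum_mem_eq_finsum_frontier_add_ncard_interior [TopologicalSpace α] {A : ι → Set α}
    (hA : ∀ i, IsClosed (A i)) {v : α} (hfin : {i | v ∈ A i}.Finite) {θ : ι → ℝ}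
    (hθ : ∀ i, v ∈ interior (A i) → θ i = 1) :
    ∑ᶠ i ∈ {i | v ∈ A i}, θ i
      = (∑ᶠ i ∈ {i | v ∈ frontier (A i)}, θ i) + ({i | v ∈ interior (A i)}.ncard : ℝ) := by
  have hsplit : {i | v ∈ A i} = {i | v ∈ frontier (A i)} ∪ {i | v ∈ interior (A i)} := by
    ext i
    have hint_sub : v ∈ interior (A i) → v ∈ A i := fun h => interior_subset h
    simp only [Set.mem_union, Set.mem_ofPred_eq, (hA i).frontier_eq, Set.mem_sdiff]
    tauto
  have hdisj : Disjoint {i | v ∈ frontier (A i)} {i | v ∈ interior (A i)} :=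
    Set.disjoint_left.mpr fun i hfr hint => hfr.2 hint
  have hint_fin : {i | v ∈ interior (A i)}.Finite :=
    hfin.subset (Set.ofPred_subset_ofPred.mpr fun i h => interior_subset h)
  rw [hsplit, finsum_mem_union hdisj (hfin.subset fun i h => (hA i).frontier_subset h) hint_fin,
    finsum_mem_congr (t := {i | v ∈ interior (A i)}) rfl hθ,
    finsum_mem_eq_finite_toFinset_sum _ hint_fin, Finset.sum_const, nsmul_one,
    Set.ncard_eq_toFinset_card _ hint_fin]

end Multiplicity

theorem locallyFinite_of_finite_nonempty_inter_isCompact {ι X : Type*} [TopologicalSpace X]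
    [WeaklyLocallyCompactSpace X] {f : ι → Set X}
    (hf : ∀ K, IsCompact K → {i | (f i ∩ K).Nonempty}.Finite) : LocallyFinite f := fun x =>
  let ⟨K, hK, hKx⟩ := exists_compact_mem_nhds x
  ⟨K, hKx, hf K hK⟩

section Density

variable {α : Type*} [PseudoMetricSpace α] [MeasurableSpace α]

noncomputable def ballDensityRatio (μ : Measure α) (A : Set α) (v : α) (r : ℝ) : ℝ :=
  (μ (A ∩ Metric.ball v r)).toReal / (μ (Metric.ball v r)).toReal

variable {μ : Measure α}

theorem measure_ball_toReal_pos [ProperSpace α] [IsFiniteMeasureOnCompacts μ]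
    [μ.IsOpenPosMeasure] (v : α) {r : ℝ} (hr : 0 < r) : 0 < (μ (Metric.ball v r)).toReal :=
  ENNReal.toReal_pos (Metric.measure_ball_pos μ v hr).ne' measure_ball_lt_top.ne

theorem tendsto_ballDensityRatio_of_mem_interior [ProperSpace α] [IsFiniteMeasureOnCompacts μ]
    [μ.IsOpenPosMeasure] {A : Set α} {v : α} (hv : v ∈ interior A) :
    Tendsto (ballDensityRatio μ A v) (𝓝[>] 0) (𝓝 1) := by
  obtain ⟨ε, hε, hball⟩ := Metric.mem_nhds_iff.mp (mem_interior_iff_mem_nhds.mp hv)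
  refine tendsto_const_nhds.congr' ?_
  filter_upwards [Ioo_mem_nhdsGT hε] with r hr
  rw [ballDensityRatio, Set.inter_eq_self_of_subset_right
    ((Metric.ball_subset_ball hr.2.le).trans hball), div_self (measure_ball_toReal_pos v hr.1).ne']

theorem tendsto_ballDensityRatio_of_notMem_closure {A : Set α} {v : α} (hv : v ∉ closure A) :
    Tendsto (ballDensityRatio μ A v) (𝓝[>] 0) (𝓝 0) := by
  obtain ⟨ε, hε, hball⟩ := Metric.mem_nhds_iff.mp (isClosed_closure.isOpen_compl.mem_nhds hv)
  refine tendsto_const_nhds.congr' ?_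
  filter_upwards [Ioo_mem_nhdsGT hε] with r hr
  have hdisj : A ∩ Metric.ball v r = ∅ := Set.eq_empty_of_forall_notMem fun p hp =>
    hball (Metric.ball_subset_ball hr.2.le hp.2) (subset_closure hp.1)
  rw [ballDensityRatio, hdisj, measure_empty, ENNReal.toReal_zero, zero_div]

theorem sum_ballDensityRatio_eq [OpensMeasurableSpace α] [ProperSpace α]
    [IsFiniteMeasureOnCompacts μ] [μ.IsOpenPosMeasure] {ι : Type*} {A : ι → Set α}
    (hA : ∀ i, MeasurableSet (A i)) {v : α} {r : ℝ} (hr : 0 < r) {F : Finset ι}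
    (hF : ∀ i, (A i ∩ Metric.ball v r).Nonempty → i ∈ F) {k : ℕ}
    (hk : ∀ᵐ p ∂μ, {i | p ∈ A i}.ncard = k) :
    ∑ i ∈ F, ballDensityRatio μ (A i) v r = k := by
  have hfin : ∀ i ∈ F, μ (A i ∩ Metric.ball v r) ≠ ⊤ := fun i _ =>
    ((measure_mono Set.inter_subset_right).trans_lt measure_ball_lt_top).ne
  simp only [ballDensityRatio]
  rw [← Finset.sum_div, ← ENNReal.toReal_sum hfin,
    sum_measure_inter_eq_mul hA measurableSet_ball hF hk, ENNReal.toReal_mul,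
    ENNReal.toReal_natCast, mul_div_cancel_right₀ _ (measure_ball_toReal_pos v hr).ne']

theorem natCast_eq_finsum_frontier_add_ncard_interior [OpensMeasurableSpace α] [ProperSpace α]
    [IsFiniteMeasureOnCompacts μ] [μ.IsOpenPosMeasure] {ι : Type*} [Countable ι]
    {A : ι → Set α} (hA : ∀ i, IsClosed (A i)) (hfront : ∀ i, μ (frontier (A i)) = 0)
    (hlf : LocallyFinite A) {k : ℕ}
    (hcover : ∀ p, k ≤ {i | p ∈ A i}.ncard ∧ {i | p ∈ interior (A i)}.ncard ≤ k)
    (v : α) {θ : ι → ℝ} (hθ : ∀ i, Tendsto (ballDensityRatio μ (A i) v) (𝓝[>] 0) (𝓝 (θ i))) :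
    (k : ℝ) = (∑ᶠ i ∈ {i | v ∈ frontier (A i)}, θ i) + ({i | v ∈ interior (A i)}.ncard : ℝ) := by
  obtain ⟨t, ht, hfin⟩ := hlf v
  obtain ⟨ε, hε, hball⟩ := Metric.mem_nhds_iff.mp ht
  have hk := ae_ncard_setOf_mem_eq hA hfront hcover (μ := μ)
  have hsum : ∑ i ∈ hfin.toFinset, θ i = k := by
    refine tendsto_nhds_unique (tendsto_finsetSum _ fun i _ => hθ i) (tendsto_const_nhds.congr' ?_)
    filter_upwards [Ioo_mem_nhdsGT hε] with r hr
    refine (sum_ballDensityRatio_eq (fun i => (hA i).measurableSet) hr.1 (fun i hi => ?_) hk).symm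
    exact hfin.mem_toFinset.mpr (hi.mono (Set.inter_subset_inter_right _
      ((Metric.ball_subset_ball hr.2.le).trans hball)))
  have hθ_zero : ∀ i, v ∉ A i → θ i = 0 := fun i hv => tendsto_nhds_unique (hθ i)
    (tendsto_ballDensityRatio_of_notMem_closure ((hA i).closure_eq.symm ▸ hv))
  have hθ_one : ∀ i, v ∈ interior (A i) → θ i = 1 := fun i hv =>
    tendsto_nhds_unique (hθ i) (tendsto_ballDensityRatio_of_mem_interior hv)
  have hmem : {i | v ∈ A i} ⊆ hfin.toFinset := fun i hv =>
    hfin.mem_toFinset.mpr ⟨v, hv, mem_of_mem_nhds ht⟩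
  rw [← finsum_mem_eq_finsum_frontier_add_ncard_interior hA ((Finset.finite_toSet _).subset hmem)
    hθ_one, ← hsum, finsum_mem_eq_sum_of_inter_support_eq]
  ext i
  simp only [Set.mem_inter_iff, Function.mem_support]
  exact ⟨fun h => ⟨hmem h.1, h.2⟩, fun h => ⟨by_contra fun hv => h.2 (hθ_zero i hv), h.2⟩⟩

end Density

/-- The limit `θ i` of the area ratio is the inner angle of `x i +ᵥ P` at `v` divided by `2π`,
so the `finsum` is the winding multiplicity `φ(v)`. -/
theorem stmt_0_general (m k : ℕ) (hm : 2 ≤ m)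
    (V : ZMod (2 * m) → ℝ × ℝ)
    (P : Set (ℝ × ℝ))
    (hP : P = convexHull ℝ (Set.range V))
    (x : ℕ → ℝ × ℝ)
    (hdisc : ∀ K : Set (ℝ × ℝ), IsCompact K → {i | ((x i +ᵥ P) ∩ K).Nonempty}.Finite)
    (htile : ∀ p : ℝ × ℝ,
      k ≤ {i | p ∈ x i +ᵥ P}.ncard ∧ {i | p ∈ x i +ᵥ interior P}.ncard ≤ k)
    (v : ℝ × ℝ)
    (θ : ℕ → ℝ)
    (hθ : ∀ i, Filter.Tendsto
      (fun r : ℝ => (volume ((x i +ᵥ P) ∩ Metric.ball v r)).toReal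
        / (volume (Metric.ball v r)).toReal)
      (nhdsWithin 0 (Set.Ioi 0)) (nhds (θ i))) :
    (k : ℝ) = (∑ᶠ i ∈ {i : ℕ | v ∈ frontier (x i +ᵥ P)}, θ i)
      + ({i : ℕ | v ∈ interior (x i +ᵥ P)}.ncard : ℝ) := by
  have : NeZero (2 * m) := ⟨by omega⟩
  have hPconv : Convex ℝ P := hP ▸ convex_convexHull ℝ _
  have hPclosed : IsClosed P := hP ▸ ((Set.finite_range V).isCompact_convexHull ℝ).isClosed
  refine natCast_eq_finsum_frontier_add_ncard_interior (fun i => hPclosed.vadd _)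
    (fun i => (hPconv.vadd _).addHaar_frontier volume)
    (locallyFinite_of_finite_nonempty_inter_isCompact hdisc) (fun p => ?_) v hθ
  simpa only [interior_vadd] using htile p

/-- Multiplicity identity for `k`-fold translative tilings by a centrally symmetric
convex `2m`-gon `P`: at every vertex `v` of a translate, `k = φ(v) + ψ(v)`, where
`ψ(v)` counts translates whose interior contains `v`, and `φ(v)` is the total
angular (winding) multiplicity at `v`, i.e. the sum over translates having `v`
on their boundary of the inner angle at `v` divided by `2π`; the latter is the
local area density `θ i` of the translate at `v`. -/
theorem stmt_0 (m k : ℕ) (hm : 2 ≤ m) (hk : 0 < k)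
    (V : ZMod (2 * m) → ℝ × ℝ) (hVinj : Function.Injective V)
    (P : Set (ℝ × ℝ))
    (hP : P = convexHull ℝ (Set.range V))
    (hsym : ∀ p ∈ P, -p ∈ P)
    (x : ℕ → ℝ × ℝ)
    (hdisc : ∀ K : Set (ℝ × ℝ), IsCompact K → {i | ((x i +ᵥ P) ∩ K).Nonempty}.Finite)
    (htile : ∀ p : ℝ × ℝ,
      k ≤ {i | p ∈ x i +ᵥ P}.ncard ∧ {i | p ∈ x i +ᵥ interior P}.ncard ≤ k)
    (v : ℝ × ℝ) (hv : ∃ i j, v = x i + V j)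
    (θ : ℕ → ℝ)
    (hθ : ∀ i, Filter.Tendsto
      (fun r : ℝ => (volume ((x i +ᵥ P) ∩ Metric.ball v r)).toReal
        / (volume (Metric.ball v r)).toReal)
      (nhdsWithin 0 (Set.Ioi 0)) (nhds (θ i))) :
    (k : ℝ) = (∑ᶠ i ∈ {i : ℕ | v ∈ frontier (x i +ᵥ P)}, θ i)
      + ({i : ℕ | v ∈ interior (x i +ᵥ P)}.ncard : ℝ) :=
  stmt_0_general m k hm V P hP x hdisc htile v θ hθ
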